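/- (Lemma 4.3 of the paper, key identity.) For every β = 1, …, n−1 and every (w,ζ) ∈ ℂ^{n−1} × ℂ with ζ ≠ 0, the function G(w,ζ) = Y⁰(w)/ζ satisfies e_β̄(G)(w,ζ) = (Σ_{α=1}^{n−1} Y^α(w)·g_{αβ̄}(w))/ζ. -/

import Mathlib

noncomputable section

/-- Wirtinger derivative `∂f/∂u(a)` of `f` at `a` along the complex direction `e`:
`(1/2)(Df(a)[e] − i·Df(a)[i·e])`, with `Df` the real Fréchet derivative. -/
def wirt {E : Type*} [NormedAddCommGroup E] [NormedSpace ℂ E]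
    (f : E → ℂ) (a e : E) : ℂ :=
  (1 / 2) * (fderiv ℝ f a e - Complex.I * fderiv ℝ f a (Complex.I • e))

/-- Conjugate Wirtinger derivative `∂f/∂ū(a)` of `f` at `a` along the complex direction `e`:
`(1/2)(Df(a)[e] + i·Df(a)[i·e])`. -/
def wirtBar {E : Type*} [NormedAddCommGroup E] [NormedSpace ℂ E]
    (f : E → ℂ) (a e : E) : ℂ :=
  (1 / 2) * (fderiv ℝ f a e + Complex.I * fderiv ℝ f a (Complex.I • e))

/-- `N(w) = 1 + Σ_γ |w^γ|²`. -/
def Nfun {m : ℕ} (w : Fin m → ℂ) : ℝ := 1 + ∑ γ, Complex.normSq (w γ)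

/-- `L(w) = log(ρ(w)²) + log N(w)`. -/
def Lfun {m : ℕ} (ρ : (Fin m → ℂ) → ℝ) (w : Fin m → ℂ) : ℝ :=
  Real.log (ρ w ^ 2) + Real.log (Nfun w)

/-- `g_{αβ̄}(w) = ∂²L/∂w^α∂w̄^β(w)`. -/
def gfun {m : ℕ} (ρ : (Fin m → ℂ) → ℝ) (α β : Fin m) (w : Fin m → ℂ) : ℂ :=
  wirt (fun w' => wirtBar (fun w'' => ((Lfun ρ w'' : ℝ) : ℂ)) w' (Pi.single β 1))
    w (Pi.single α 1)

/-- The operator `Z(F) = ζ·∂F/∂ζ` on functions of `(w, ζ) ∈ ℂ^m × ℂ`. -/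
def Zop {m : ℕ} (F : (Fin m → ℂ) × ℂ → ℂ) (p : (Fin m → ℂ) × ℂ) : ℂ :=
  p.2 * wirt F p (0, 1)

/-- The operator `Z̄(F) = ζ̄·∂F/∂ζ̄`. -/
def ZbarOp {m : ℕ} (F : (Fin m → ℂ) × ℂ → ℂ) (p : (Fin m → ℂ) × ℂ) : ℂ :=
  (starRingEnd ℂ) p.2 * wirtBar F p (0, 1)

/-- The adapted polar frame operator
`e_α(F) = ∂F/∂w^α − (∂(log ρ²)/∂w^α)·ζ·∂F/∂ζ + (1/2)(∂(log N)/∂w^α)·(ζ̄·∂F/∂ζ̄ − ζ·∂F/∂ζ)`. -/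
def eOp {m : ℕ} (ρ : (Fin m → ℂ) → ℝ) (α : Fin m)
    (F : (Fin m → ℂ) × ℂ → ℂ) (p : (Fin m → ℂ) × ℂ) : ℂ :=
  wirt F p (Pi.single α 1, 0)
    - wirt (fun w => ((Real.log (ρ w ^ 2) : ℝ) : ℂ)) p.1 (Pi.single α 1)
        * (p.2 * wirt F p (0, 1))
    + (1 / 2) * wirt (fun w => ((Real.log (Nfun w) : ℝ) : ℂ)) p.1 (Pi.single α 1)
        * ((starRingEnd ℂ) p.2 * wirtBar F p (0, 1) - p.2 * wirt F p (0, 1))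

/-- The adapted polar frame operator
`e_ᾱ(F) = ∂F/∂w̄^α − (∂(log ρ²)/∂w̄^α)·ζ̄·∂F/∂ζ̄ + (1/2)(∂(log N)/∂w̄^α)·(ζ·∂F/∂ζ − ζ̄·∂F/∂ζ̄)`. -/
def eBarOp {m : ℕ} (ρ : (Fin m → ℂ) → ℝ) (α : Fin m)
    (F : (Fin m → ℂ) × ℂ → ℂ) (p : (Fin m → ℂ) × ℂ) : ℂ :=
  wirtBar F p (Pi.single α 1, 0)
    - wirtBar (fun w => ((Real.log (ρ w ^ 2) : ℝ) : ℂ)) p.1 (Pi.single α 1)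
        * ((starRingEnd ℂ) p.2 * wirtBar F p (0, 1))
    + (1 / 2) * wirtBar (fun w => ((Real.log (Nfun w) : ℝ) : ℂ)) p.1 (Pi.single α 1)
        * (p.2 * wirt F p (0, 1) - (starRingEnd ℂ) p.2 * wirtBar F p (0, 1))

/-- `Y^α(w) = (v^α − vⁿ·w^α)·√N(w)`, where `ℂⁿ = ℂ^{m+1}` and `α` ranges in `Fin m`. -/
def Yfun {m : ℕ} (v : Fin (m + 1) → ℂ) (α : Fin m) (w : Fin m → ℂ) : ℂ :=
  (v α.castSucc - v (Fin.last m) * w α) * (Real.sqrt (Nfun w) : ℂ)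

/-- `Y⁰(w) = vⁿ·√N(w) + Σ_α Y^α(w)·∂L/∂w^α(w)`. -/
def Y0fun {m : ℕ} (ρ : (Fin m → ℂ) → ℝ) (v : Fin (m + 1) → ℂ) (w : Fin m → ℂ) : ℂ :=
  v (Fin.last m) * (Real.sqrt (Nfun w) : ℂ)
    + ∑ α, Yfun v α w * wirt (fun w' => ((Lfun ρ w' : ℝ) : ℂ)) w (Pi.single α 1)

/-!
`G = Y⁰/ζ` is holomorphic in `ζ` and homogeneous of degree `-1`, so in `e_β̄ G` the `ζ̄`-terms
vanish and `ζ ∂G/∂ζ = -G`: thus `ζ · e_β̄ G = ∂Y⁰/∂w̄^β - ½ (∂ log N/∂w̄^β) Y⁰`.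
Both `vⁿ√N` and `Y^α` are holomorphic functions times `√N`, and `∂√N/∂w̄ = ½ (∂ log N/∂w̄) √N`,
so each is multiplied by `½ ∂ log N/∂w̄^β` under `∂/∂w̄^β`. Differentiating
`Y⁰ = vⁿ√N + Σ Y^α ∂L/∂w^α` therefore gives `½ (∂ log N/∂w̄^β) Y⁰ + Σ Y^α ∂²L/∂w̄^β∂w^α`,
and the mixed Wirtinger derivatives of the `C²` function `L` commute, giving `g_{αβ̄}`.
-/

open Complex

section Wirtinger

variable {E : Type*} [NormedAddCommGroup E] [NormedSpace ℂ E] {f g : E → ℂ} {a e : E}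

@[simp] lemma wirt_zero_right : wirt f a 0 = 0 := by simp [wirt]

@[simp] lemma wirtBar_zero_right : wirtBar f a 0 = 0 := by simp [wirtBar]

lemma wirt_mul (hf : DifferentiableAt ℝ f a) (hg : DifferentiableAt ℝ g a) :
    wirt (fun x => f x * g x) a e = f a * wirt g a e + g a * wirt f a e := by
  simp only [wirt, fderiv_fun_mul hf hg, add_apply, smul_apply, smul_eq_mul]
  ring

lemma wirtBar_mul (hf : DifferentiableAt ℝ f a) (hg : DifferentiableAt ℝ g a) :
    wirtBar (fun x => f x * g x) a e = f a * wirtBar g a e + g a * wirtBar f a e := by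
  simp only [wirtBar, fderiv_fun_mul hf hg, add_apply, smul_apply, smul_eq_mul]
  ring

lemma wirtBar_add (hf : DifferentiableAt ℝ f a) (hg : DifferentiableAt ℝ g a) :
    wirtBar (fun x => f x + g x) a e = wirtBar f a e + wirtBar g a e := by
  simp only [wirtBar, fderiv_fun_add hf hg, add_apply]
  ring

lemma wirtBar_sum {ι : Type*} (s : Finset ι) {F : ι → E → ℂ}
    (hF : ∀ i ∈ s, DifferentiableAt ℝ (F i) a) :
    wirtBar (fun x => ∑ i ∈ s, F i x) a e = ∑ i ∈ s, wirtBar (F i) a e := by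
  simp only [wirtBar, fderiv_fun_sum hF, FunLike.coe_sum, Finset.sum_apply,
    Finset.mul_sum, ← Finset.sum_add_distrib]

lemma wirt_eq_fderiv_of_differentiableAt (hf : DifferentiableAt ℂ f a) :
    wirt f a e = fderiv ℂ f a e := by
  simp only [wirt, hf.fderiv_restrictScalars ℝ, ContinuousLinearMap.coe_restrictScalars',
    map_smul, smul_eq_mul]
  ring_nf
  simp only [I_sq]
  ring

lemma wirtBar_eq_zero_of_differentiableAt (hf : DifferentiableAt ℂ f a) :
    wirtBar f a e = 0 := by
  simp only [wirtBar, hf.fderiv_restrictScalars ℝ, ContinuousLinearMap.coe_restrictScalars',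
    map_smul, smul_eq_mul]
  ring_nf
  simp only [I_sq]
  ring

variable {F : Type*} [NormedAddCommGroup F] [NormedSpace ℂ F]

lemma wirt_comp_clm {f : F → ℂ} (L : E →L[ℂ] F) (hf : DifferentiableAt ℝ f (L a)) :
    wirt (fun x => f (L x)) a e = wirt f (L a) (L e) := by
  have hL : fderiv ℝ (fun x => f (L x)) a = (fderiv ℝ f (L a)).comp (L.restrictScalars ℝ) :=
    (hf.hasFDerivAt.comp a (L.restrictScalars ℝ).hasFDerivAt).fderiv
  simp [wirt, hL]

lemma wirtBar_comp_clm {f : F → ℂ} (L : E →L[ℂ] F) (hf : DifferentiableAt ℝ f (L a)) :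
    wirtBar (fun x => f (L x)) a e = wirtBar f (L a) (L e) := by
  have hL : fderiv ℝ (fun x => f (L x)) a = (fderiv ℝ f (L a)).comp (L.restrictScalars ℝ) :=
    (hf.hasFDerivAt.comp a (L.restrictScalars ℝ).hasFDerivAt).fderiv
  simp [wirtBar, hL]

end Wirtinger

section RealValued

variable {E : Type*} [NormedAddCommGroup E] [NormedSpace ℂ E] {r : E → ℝ} {a e : E}

lemma wirtBar_ofReal_comp {φ : ℝ → ℝ} {c : ℝ} (hφ : HasDerivAt φ c (r a))
    (hr : DifferentiableAt ℝ r a) :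
    wirtBar (fun x => (φ (r x) : ℂ)) a e = c * wirtBar (fun x => (r x : ℂ)) a e := by
  have h₁ := (ofRealCLM.hasFDerivAt.comp a (hφ.comp_hasFDerivAt a hr.hasFDerivAt)).fderiv
  have h₂ := (ofRealCLM.hasFDerivAt.comp a hr.hasFDerivAt).fderiv
  simp only [Function.comp_def, ofRealCLM_apply] at h₁ h₂
  simp [wirtBar, h₁, h₂]
  ring

lemma wirtBar_ofReal_sqrt (hr : DifferentiableAt ℝ r a) (hpos : 0 < r a) :
    wirtBar (fun x => (√(r x) : ℂ)) a e
      = 1 / 2 * wirtBar (fun x => (Real.log (r x) : ℂ)) a e * √(r a) := by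
  have hsq : (√(r a) : ℂ) * √(r a) = r a := by exact_mod_cast Real.mul_self_sqrt hpos.le
  rw [wirtBar_ofReal_comp (Real.hasDerivAt_sqrt hpos.ne') hr,
    wirtBar_ofReal_comp (Real.hasDerivAt_log hpos.ne') hr]
  push_cast
  rw [← hsq]
  field_simp

lemma wirtBar_mul_sqrt {h : E → ℂ} (hh : DifferentiableAt ℂ h a)
    (hr : DifferentiableAt ℝ r a) (hpos : 0 < r a) :
    wirtBar (fun x => h x * √(r x)) a e
      = 1 / 2 * wirtBar (fun x => (Real.log (r x) : ℂ)) a e * (h a * √(r a)) := by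
  rw [wirtBar_mul (hh.restrictScalars ℝ) (by fun_prop (disch := exact hpos.ne')),
    wirtBar_ofReal_sqrt hr hpos, wirtBar_eq_zero_of_differentiableAt hh]
  ring

end RealValued

section SecondOrder

variable {E : Type*} [NormedAddCommGroup E] [NormedSpace ℂ E] {f : E → ℂ}

lemma hasFDerivAt_wirt {x : E} (hf : DifferentiableAt ℝ (fderiv ℝ f) x) (u : E) :
    HasFDerivAt (fun y => wirt f y u)
      ((1 / 2 : ℂ) • ((fderiv ℝ (fderiv ℝ f) x).flip u
        - I • (fderiv ℝ (fderiv ℝ f) x).flip (I • u))) x := by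
  have h := fun u : E => hf.hasFDerivAt.clm_apply (hasFDerivAt_const u x)
  simp only [ContinuousLinearMap.comp_zero, zero_add] at h
  exact ((h u).sub ((h (I • u)).const_mul I)).const_mul (1 / 2 : ℂ)

lemma hasFDerivAt_wirtBar {x : E} (hf : DifferentiableAt ℝ (fderiv ℝ f) x) (u : E) :
    HasFDerivAt (fun y => wirtBar f y u)
      ((1 / 2 : ℂ) • ((fderiv ℝ (fderiv ℝ f) x).flip u
        + I • (fderiv ℝ (fderiv ℝ f) x).flip (I • u))) x := by
  have h := fun u : E => hf.hasFDerivAt.clm_apply (hasFDerivAt_const u x)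
  simp only [ContinuousLinearMap.comp_zero, zero_add] at h
  exact ((h u).add ((h (I • u)).const_mul I)).const_mul (1 / 2 : ℂ)

lemma ContDiff.differentiable_wirt (hf : ContDiff ℝ 2 f) (u : E) :
    Differentiable ℝ fun y => wirt f y u := fun x =>
  (hasFDerivAt_wirt ((hf.fderiv_right (m := 1) le_rfl).differentiable one_ne_zero x)
    u).differentiableAt

lemma wirt_wirtBar_comm (hf : ContDiff ℝ 2 f) (x u v : E) :
    wirt (fun y => wirtBar f y v) x u = wirtBar (fun y => wirt f y u) x v := by
  have hd : DifferentiableAt ℝ (fderiv ℝ f) x :=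
    (hf.fderiv_right (m := 1) le_rfl).differentiable one_ne_zero x
  have hsymm := (hf.contDiffAt (x := x)).isSymmSndFDerivAt (by simp)
  rw [wirt, wirtBar, (hasFDerivAt_wirt hd u).fderiv, (hasFDerivAt_wirtBar hd v).fderiv]
  simp [hsymm u v, hsymm (I • u) v, hsymm u (I • v), hsymm (I • u) (I • v)]
  ring

end SecondOrder

section Quotient

variable {E : Type*} [NormedAddCommGroup E] [NormedSpace ℂ E] {f : E → ℂ} {w : E} {ζ : ℂ}

open ContinuousLinearMap in
private lemma div_snd_eq (f : E → ℂ) :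
    (fun p : E × ℂ => f p.1 / p.2) = fun p => f (fst ℂ E ℂ p) * Inv.inv (snd ℂ E ℂ p) :=
  funext fun _ => div_eq_mul_inv _ _

open ContinuousLinearMap in
private lemma differentiableAt_comp_fst_and_inv_comp_snd (hf : DifferentiableAt ℝ f w)
    (hζ : ζ ≠ 0) :
    DifferentiableAt ℝ (fun p => f (fst ℂ E ℂ p)) (w, ζ)
      ∧ DifferentiableAt ℝ (fun p => Inv.inv (snd ℂ E ℂ p)) (w, ζ) :=
  ⟨hf.comp (w, ζ) ((fst ℂ E ℂ).restrictScalars ℝ).differentiableAt,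
    ((differentiableAt_inv (𝕜 := ℂ) hζ).restrictScalars ℝ).comp (w, ζ)
      ((snd ℂ E ℂ).restrictScalars ℝ).differentiableAt⟩

lemma wirtBar_div_snd (hf : DifferentiableAt ℝ f w) (hζ : ζ ≠ 0) (e : E) (c : ℂ) :
    wirtBar (fun p : E × ℂ => f p.1 / p.2) (w, ζ) (e, c) = wirtBar f w e / ζ := by
  have hinv : DifferentiableAt ℂ Inv.inv ζ := differentiableAt_inv hζ
  obtain ⟨h₁, h₂⟩ := differentiableAt_comp_fst_and_inv_comp_snd hf hζ
  rw [div_snd_eq, wirtBar_mul h₁ h₂, wirtBar_comp_clm _ (hinv.restrictScalars ℝ),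
    wirtBar_comp_clm _ hf]
  simp only [ContinuousLinearMap.coe_fst', ContinuousLinearMap.coe_snd']
  rw [wirtBar_eq_zero_of_differentiableAt hinv]
  simp [div_eq_inv_mul]

lemma wirt_div_snd (hf : DifferentiableAt ℝ f w) (hζ : ζ ≠ 0) (e : E) (c : ℂ) :
    wirt (fun p : E × ℂ => f p.1 / p.2) (w, ζ) (e, c) = wirt f w e / ζ - c * f w / ζ ^ 2 := by
  have hinv : DifferentiableAt ℂ Inv.inv ζ := differentiableAt_inv hζ
  obtain ⟨h₁, h₂⟩ := differentiableAt_comp_fst_and_inv_comp_snd hf hζ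
  rw [div_snd_eq, wirt_mul h₁ h₂, wirt_comp_clm _ (hinv.restrictScalars ℝ),
    wirt_comp_clm _ hf]
  simp only [ContinuousLinearMap.coe_fst', ContinuousLinearMap.coe_snd']
  rw [wirt_eq_fderiv_of_differentiableAt hinv, fderiv_inv' hζ]
  simp
  ring

end Quotient

section PolarFrame

variable {m : ℕ} {ρ : (Fin m → ℂ) → ℝ} {v : Fin (m + 1) → ℂ}

lemma contDiff_Nfun {n : WithTop ℕ∞} : ContDiff ℝ n (Nfun (m := m)) := by
  unfold Nfun
  simp only [Complex.normSq_eq_norm_sq]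
  exact contDiff_const.add <| ContDiff.sum fun γ _ =>
    (contDiff_norm_sq ℝ).comp (contDiff_apply ℝ ℂ γ)

lemma differentiable_Nfun : Differentiable ℝ (Nfun (m := m)) :=
  contDiff_Nfun.differentiable_one

lemma Nfun_pos (w : Fin m → ℂ) : 0 < Nfun w :=
  add_pos_of_pos_of_nonneg one_pos <| Finset.sum_nonneg fun _ _ => Complex.normSq_nonneg _

lemma differentiable_sqrt_Nfun : Differentiable ℝ fun w : Fin m → ℂ => (√(Nfun w) : ℂ) :=
  fun w => ofRealCLM.differentiableAt.comp w ((differentiable_Nfun w).sqrt (Nfun_pos w).ne')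

lemma contDiff_Lfun (hρpos : ∀ w, 0 < ρ w) (hρ : ContDiff ℝ 2 ρ) :
    ContDiff ℝ 2 fun w => (Lfun ρ w : ℂ) :=
  ofRealCLM.contDiff.comp <| ((hρ.pow 2).log fun w => (pow_pos (hρpos w) 2).ne').add
    (contDiff_Nfun.log fun w => (Nfun_pos w).ne')

lemma differentiable_Yfun (α : Fin m) : Differentiable ℝ (Yfun v α) :=
  ((differentiable_const _).sub ((differentiable_apply α).const_mul _)).mul
    differentiable_sqrt_Nfun

lemma differentiable_Y0fun (hρpos : ∀ w, 0 < ρ w) (hρ : ContDiff ℝ 2 ρ) :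
    Differentiable ℝ (Y0fun ρ v) :=
  (differentiable_sqrt_Nfun.const_mul _).add <| Differentiable.fun_sum fun α _ =>
    (differentiable_Yfun α).mul ((contDiff_Lfun hρpos hρ).differentiable_wirt _)

lemma eBarOp_div_snd {f : (Fin m → ℂ) → ℂ} {w : Fin m → ℂ} {ζ : ℂ}
    (hf : DifferentiableAt ℝ f w) (hζ : ζ ≠ 0) (β : Fin m) :
    eBarOp ρ β (fun p => f p.1 / p.2) (w, ζ)
      = (wirtBar f w (Pi.single β 1)
          - 1 / 2 * wirtBar (fun w => (Real.log (Nfun w) : ℂ)) w (Pi.single β 1) * f w) / ζ := by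
  simp only [eBarOp, wirtBar_div_snd hf hζ, wirt_div_snd hf hζ, wirt_zero_right,
    wirtBar_zero_right]
  field_simp
  ring

lemma wirtBar_Yfun (α β : Fin m) (w : Fin m → ℂ) :
    wirtBar (Yfun v α) w (Pi.single β 1)
      = 1 / 2 * wirtBar (fun w => (Real.log (Nfun w) : ℂ)) w (Pi.single β 1) * Yfun v α w :=
  wirtBar_mul_sqrt (by fun_prop) (differentiable_Nfun w) (Nfun_pos w)

lemma wirtBar_Y0fun (hρpos : ∀ w, 0 < ρ w) (hρ : ContDiff ℝ 2 ρ) (β : Fin m)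
    (w : Fin m → ℂ) :
    wirtBar (Y0fun ρ v) w (Pi.single β 1)
      = 1 / 2 * wirtBar (fun w => (Real.log (Nfun w) : ℂ)) w (Pi.single β 1) * Y0fun ρ v w
        + ∑ α, Yfun v α w * gfun ρ α β w := by
  set c := 1 / 2 * wirtBar (fun w => (Real.log (Nfun w) : ℂ)) w (Pi.single β 1)
  have hL := (contDiff_Lfun hρpos hρ).differentiable_wirt
  have hdiff : ∀ α, DifferentiableAt ℝ
      (fun w => Yfun v α w * wirt (fun w' => (Lfun ρ w' : ℂ)) w (Pi.single α 1)) w :=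
    fun α => (differentiable_Yfun α w).mul (hL _ w)
  have hterm : ∀ α, wirtBar
      (fun w => Yfun v α w * wirt (fun w' => (Lfun ρ w' : ℂ)) w (Pi.single α 1)) w (Pi.single β 1)
        = Yfun v α w * gfun ρ α β w
          + c * (Yfun v α w * wirt (fun w' => (Lfun ρ w' : ℂ)) w (Pi.single α 1)) := by
    intro α
    rw [wirtBar_mul (differentiable_Yfun α w) (hL _ w), wirtBar_Yfun, gfun,
      wirt_wirtBar_comm (contDiff_Lfun hρpos hρ)]
    ring
  unfold Y0fun
  rw [wirtBar_add ((differentiable_sqrt_Nfun w).const_mul _)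
      (DifferentiableAt.fun_sum fun α _ => hdiff α), wirtBar_sum _ fun α _ => hdiff α,
    wirtBar_mul_sqrt (differentiableAt_const _) (differentiable_Nfun w) (Nfun_pos w),
    Finset.sum_congr rfl fun α _ => hterm α, Finset.sum_add_distrib, ← Finset.mul_sum]
  ring

end PolarFrame

theorem statement3_general (m : ℕ) (ρ : (Fin m → ℂ) → ℝ)
    (hρpos : ∀ w, 0 < ρ w) (hρ : ContDiff ℝ 2 ρ)
    (v : Fin (m + 1) → ℂ) :
    ∀ (β : Fin m) (w : Fin m → ℂ) (ζ : ℂ), ζ ≠ 0 →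
      eBarOp ρ β (fun p => Y0fun ρ v p.1 / p.2) (w, ζ)
        = (∑ α, Yfun v α w * gfun ρ α β w) / ζ := by
  intro β w ζ hζ
  rw [eBarOp_div_snd (differentiable_Y0fun hρpos hρ w) hζ, wirtBar_Y0fun hρpos hρ]
  ring

/-- **Lemma 4.3 (key identity).** For `G(w,ζ) = Y⁰(w)/ζ` one has
`e_β̄(G)(w,ζ) = (Σ_α Y^α(w)·g_{αβ̄}(w))/ζ` whenever `ζ ≠ 0`.
Here `n = m + 1 ≥ 2`. -/
theorem statement3 (m : ℕ) (hm : 1 ≤ m) (ρ : (Fin m → ℂ) → ℝ)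
    (hρpos : ∀ w, 0 < ρ w) (hρ : ContDiff ℝ 2 ρ)
    (v : Fin (m + 1) → ℂ) :
    ∀ (β : Fin m) (w : Fin m → ℂ) (ζ : ℂ), ζ ≠ 0 →
      eBarOp ρ β (fun p => Y0fun ρ v p.1 / p.2) (w, ζ)
        = (∑ α, Yfun v α w * gfun ρ α β w) / ζ :=
  statement3_general m ρ hρpos hρ v
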